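/- arXiv:1810.10406 — 3 statements merged into one kernel-verified Lean document; each statement's English description precedes it below -/
import Mathlib

section
/- Let L and D be N×N matrices with non-negative real entries such that for all j,l ∈ {1,…,N}: L_{jl} ≤ L_{jj}, L_{jl} ≤ L_{ll}, and D_{jl} ≤ max{D_{jj}, D_{ll}}. Then (1/N) · Σ_{j,l=1}^{N} √(L_{jl} D_{jl}) ≤ 2 · Σ_{j=1}^{N} √(L_{jj} D_{jj}). -/
/-!
Since `L j l ≤ L j j, L l l` and `D j l` is bounded by the larger of `D j j, D l l`, each term
`√(L j l * D j l)` is bounded by one of the two diagonal terms, hence by their sum. Summing over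
the `N²` pairs gives `2 N` times the diagonal sum.
-/

open Finset

lemma Real.sqrt_mul_le_sqrt_mul {a a' b b' : ℝ} (ha : a ≤ a') (hb : b ≤ b') (hb0 : 0 ≤ b) :
    √(a * b) ≤ √(a' * b') := by
  rcases le_or_gt 0 a with ha0 | ha0
  · exact Real.sqrt_le_sqrt (mul_le_mul ha hb hb0 (ha0.trans ha))
  · rw [Real.sqrt_eq_zero'.mpr (mul_nonpos_of_nonpos_of_nonneg ha0.le hb0)]
    exact Real.sqrt_nonneg _

lemma sum_sum_add_eq_two_mul_card_mul {ι : Type*} [Fintype ι] (f : ι → ℝ) :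
    ∑ j, ∑ l, (f j + f l) = 2 * Fintype.card ι * ∑ j, f j := by
  simp only [sum_add_distrib, sum_const, card_univ, nsmul_eq_mul, ← mul_sum]
  ring

section EntrywiseBound

variable {ι : Type*} (L D : ι → ι → ℝ)

lemma sqrt_mul_apply_le_add_diag (hD : ∀ j l, 0 ≤ D j l)
    (hL1 : ∀ j l, L j l ≤ L j j) (hL2 : ∀ j l, L j l ≤ L l l)
    (hDm : ∀ j l, D j l ≤ max (D j j) (D l l)) (j l : ι) :
    √(L j l * D j l) ≤ √(L j j * D j j) + √(L l l * D l l) := by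
  rcases le_total (D l l) (D j j) with h | h
  · have hD' : D j l ≤ D j j := (hDm j l).trans (max_eq_left h).le
    exact (Real.sqrt_mul_le_sqrt_mul (hL1 j l) hD' (hD j l)).trans
      (le_add_of_nonneg_right (Real.sqrt_nonneg _))
  · have hD' : D j l ≤ D l l := (hDm j l).trans (max_eq_right h).le
    exact (Real.sqrt_mul_le_sqrt_mul (hL2 j l) hD' (hD j l)).trans
      (le_add_of_nonneg_left (Real.sqrt_nonneg _))

lemma sum_sqrt_mul_le_two_mul_card_mul [Fintype ι] (hD : ∀ j l, 0 ≤ D j l)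
    (hL1 : ∀ j l, L j l ≤ L j j) (hL2 : ∀ j l, L j l ≤ L l l)
    (hDm : ∀ j l, D j l ≤ max (D j j) (D l l)) :
    ∑ j, ∑ l, √(L j l * D j l) ≤ 2 * Fintype.card ι * ∑ j, √(L j j * D j j) :=
  calc ∑ j, ∑ l, √(L j l * D j l)
      ≤ ∑ j, ∑ l, (√(L j j * D j j) + √(L l l * D l l)) :=
        sum_le_sum fun j _ => sum_le_sum fun l _ =>
          sqrt_mul_apply_le_add_diag L D hD hL1 hL2 hDm j l
    _ = 2 * Fintype.card ι * ∑ j, √(L j j * D j j) :=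
        sum_sum_add_eq_two_mul_card_mul fun j => √(L j j * D j j)

end EntrywiseBound

theorem stmt0_general (N : ℕ) (L D : Fin N → Fin N → ℝ)
    (hD : ∀ j l, 0 ≤ D j l)
    (hL1 : ∀ j l, L j l ≤ L j j) (hL2 : ∀ j l, L j l ≤ L l l)
    (hDm : ∀ j l, D j l ≤ max (D j j) (D l l)) :
    (1 / N : ℝ) * ∑ j, ∑ l, Real.sqrt (L j l * D j l) ≤
      2 * ∑ j, Real.sqrt (L j j * D j j) := by
  rcases Nat.eq_zero_or_pos N with rfl | hN
  · simp
  have hN' : (N : ℝ) ≠ 0 := by positivity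
  calc (1 / N : ℝ) * ∑ j, ∑ l, √(L j l * D j l)
      ≤ (1 / N : ℝ) * (2 * N * ∑ j, √(L j j * D j j)) := by
        gcongr
        simpa using sum_sqrt_mul_le_two_mul_card_mul L D hD hL1 hL2 hDm
    _ = 2 * ∑ j, √(L j j * D j j) := by field_simp

/-- Entrywise matrix bound (Lemma on N×N nonnegative matrices). -/
theorem stmt0 (N : ℕ) (L D : Fin N → Fin N → ℝ)
    (hL : ∀ j l, 0 ≤ L j l) (hD : ∀ j l, 0 ≤ D j l)
    (hL1 : ∀ j l, L j l ≤ L j j) (hL2 : ∀ j l, L j l ≤ L l l)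
    (hDm : ∀ j l, D j l ≤ max (D j j) (D l l)) :
    (1 / N : ℝ) * ∑ j, ∑ l, Real.sqrt (L j l * D j l) ≤
      2 * ∑ j, Real.sqrt (L j j * D j j) :=
  stmt0_general N L D hD hL1 hL2 hDm
end

section
/- Let ρ be a density operator on a finite-dimensional Hilbert space H and let Λ be an operator with 0 ≤ Λ ≤ 𝟙 satisfying tr(Λρ) ≥ 1 − ε for some 0 ≤ ε < 1. Then the post-measurement state ρ' := √Λ ρ √Λ / tr(Λρ) satisfies ‖ρ − ρ'‖₁ ≤ 2√ε (gentle measurement lemma). -/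
/-!
Write `ρ = A Aᴴ` and `ρ' = B Bᴴ` with `A = √ρ`, `B = √Λ √ρ / √p` and `p = tr(Λρ)`. For any `A`, `B`,
reading `A Aᴴ - B Bᴴ` in its eigenbasis and applying Cauchy–Schwarz twice gives
`‖A Aᴴ - B Bᴴ‖₁ ≤ ‖A - B‖₂ ‖A + B‖₂ = √((‖A‖₂² + ‖B‖₂²)² - 4 (Re tr A Bᴴ)²)`.
Here `‖A‖₂ = ‖B‖₂ = 1` and `Re tr A Bᴴ = tr(√Λ ρ) / √p ≥ √p`, because `Λ ≤ √Λ` when `0 ≤ Λ ≤ 1`;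
hence `‖ρ - ρ'‖₁ ≤ 2 √(1 - p) ≤ 2 √ε`.
-/

open Matrix
open scoped ComplexOrder

/-- Trace norm (sum of singular values) of a complex square matrix. -/
noncomputable def traceNorm {m : Type*} [Fintype m] [DecidableEq m] (A : Matrix m m ℂ) : ℝ :=
  ∑ i, Real.sqrt (((Matrix.posSemidef_conjTranspose_mul_self A).isHermitian).eigenvalues i)

/-- The positive semidefinite square root of a positive semidefinite matrix
(as defined in Mathlib of December 2024, since removed). -/
noncomputable def Matrix.PosSemidef.sqrt {n : Type*} [Fintype n] [DecidableEq n]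
    {A : Matrix n n ℂ} (hA : A.PosSemidef) : Matrix n n ℂ :=
  hA.1.eigenvectorUnitary.1 * diagonal ((↑) ∘ (√·) ∘ hA.1.eigenvalues) *
    (star hA.1.eigenvectorUnitary : Matrix n n ℂ)

open scoped MatrixOrder

lemma abs_norm_sq_sub_norm_sq_le {𝕜 E : Type*} [RCLike 𝕜] [NormedAddCommGroup E]
    [InnerProductSpace 𝕜 E] (x y : E) : |‖x‖ ^ 2 - ‖y‖ ^ 2| ≤ ‖x - y‖ * ‖x + y‖ := by
  have h : ‖x‖ ^ 2 - ‖y‖ ^ 2 = RCLike.re (inner 𝕜 (x - y) (x + y)) := by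
    simp only [inner_sub_left, inner_add_right, map_add, map_sub, inner_self_eq_norm_sq,
      inner_re_symm (𝕜 := 𝕜) y x]
    ring
  rw [h]
  exact (RCLike.abs_re_le_norm _).trans (norm_inner_le_norm _ _)

namespace Matrix

section Rectangular

variable {m n 𝕜 : Type*} [Fintype n] [RCLike 𝕜]

lemma mul_conjTranspose_self_apply_self (M : Matrix m n 𝕜) (i : m) :
    (M * Mᴴ) i i = ((∑ k, ‖M i k‖ ^ 2 : ℝ) : 𝕜) := by
  simp only [mul_apply, conjTranspose_apply, ← starRingEnd_apply, RCLike.mul_conj]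
  norm_cast

variable [Fintype m]

lemma re_trace_add_mul_conjTranspose_add (A B : Matrix m n 𝕜) :
    RCLike.re ((A + B) * (A + B)ᴴ).trace =
      RCLike.re (A * Aᴴ).trace + RCLike.re (B * Bᴴ).trace + 2 * RCLike.re (A * Bᴴ).trace := by
  have h : RCLike.re (B * Aᴴ).trace = RCLike.re (A * Bᴴ).trace := by
    rw [← conjTranspose_conjTranspose B, ← conjTranspose_mul, trace_conjTranspose,
      conjTranspose_conjTranspose, RCLike.star_def, RCLike.conj_re]
  simp only [conjTranspose_add, Matrix.add_mul, Matrix.mul_add, trace_add, map_add, h]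
  ring

lemma re_trace_sub_mul_conjTranspose_sub (A B : Matrix m n 𝕜) :
    RCLike.re ((A - B) * (A - B)ᴴ).trace =
      RCLike.re (A * Aᴴ).trace + RCLike.re (B * Bᴴ).trace - 2 * RCLike.re (A * Bᴴ).trace := by
  rw [sub_eq_add_neg, re_trace_add_mul_conjTranspose_add]
  simp [sub_eq_add_neg]

end Rectangular

variable {m 𝕜 : Type*} [Fintype m] [DecidableEq m] [RCLike 𝕜]

lemma trace_star_mul_mul_of_mem_unitary {U : Matrix m m 𝕜} (hU : U ∈ unitary _)
    (M : Matrix m m 𝕜) : (star U * M * U).trace = M.trace := by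
  rw [trace_mul_cycle, Unitary.mul_star_self_of_mem hU, one_mul]

lemma IsHermitian.trace_cfc {A : Matrix m m 𝕜} (hA : A.IsHermitian) (f : ℝ → ℝ) :
    (cfc f A).trace = ∑ i, (f (hA.eigenvalues i) : 𝕜) := by
  rw [hA.cfc_eq, IsHermitian.cfc, Unitary.conjStarAlgAut_apply, trace_mul_cycle,
    Unitary.coe_star_mul_self, one_mul, trace_diagonal]
  rfl

lemma IsHermitian.eigenvalues_eq_re_conj_apply {A : Matrix m m 𝕜} (hA : A.IsHermitian) (i : m) :
    hA.eigenvalues i = RCLike.re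
      ((star (hA.eigenvectorUnitary : Matrix m m 𝕜) * A * hA.eigenvectorUnitary) i i) := by
  have h := hA.conjStarAlgAut_star_eigenvectorUnitary
  rw [Unitary.conjStarAlgAut_apply, Unitary.coe_star, star_star] at h
  simp [h]

lemma le_cfcSqrt_of_le_one {A : Matrix m m 𝕜} (h0 : 0 ≤ A) (h1 : A ≤ 1) : A ≤ CFC.sqrt A := by
  rw [CFC.sqrt_eq_real_sqrt A, cfcₙ_eq_cfc]
  conv_lhs => rw [← cfc_id' ℝ A]
  rw [CFC.le_one_iff (R := ℝ) A] at h1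
  refine cfc_mono fun x hx => ?_
  have hx0 : 0 ≤ x := spectrum_nonneg_of_nonneg h0 hx
  exact Real.le_sqrt_of_sq_le (by nlinarith [h1 x hx])

lemma PosSemidef.trace_mul_nonneg {A B : Matrix m m 𝕜} (hA : A.PosSemidef) (hB : B.PosSemidef) :
    0 ≤ (A * B).trace := by
  rw [← CFC.sqrt_mul_sqrt_self B hB.nonneg, ← Matrix.mul_assoc, trace_mul_cycle]
  simpa [(CFC.sqrt_nonneg B).posSemidef.1.eq] using
    (hA.conjTranspose_mul_mul_same (CFC.sqrt B)).trace_nonneg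

end Matrix

variable {m : Type*} [Fintype m] [DecidableEq m]

lemma Matrix.PosSemidef.sqrt_eq_cfcSqrt {A : Matrix m m ℂ} (hA : A.PosSemidef) :
    hA.sqrt = CFC.sqrt A := by
  rw [CFC.sqrt_eq_real_sqrt A hA.nonneg, cfcₙ_eq_cfc, hA.1.cfc_eq]
  rfl

lemma traceNorm_eq_re_trace_abs (A : Matrix m m ℂ) : traceNorm A = (CFC.abs A).trace.re := by
  have hP := posSemidef_conjTranspose_mul_self A
  rw [CFC.abs, star_eq_conjTranspose, CFC.sqrt_eq_real_sqrt _ hP.nonneg, cfcₙ_eq_cfc,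
    hP.1.trace_cfc, traceNorm, Complex.re_sum]
  simp

lemma Matrix.IsHermitian.traceNorm_eq_sum_abs_eigenvalues {D : Matrix m m ℂ}
    (hD : D.IsHermitian) : traceNorm D = ∑ i, |hD.eigenvalues i| := by
  rw [traceNorm_eq_re_trace_abs, CFC.abs_eq_cfc_norm D hD.isSelfAdjoint, hD.trace_cfc,
    Complex.re_sum]
  simp

lemma traceNorm_mul_conjTranspose_sub_le_sqrt_mul_sqrt (A B : Matrix m m ℂ) :
    traceNorm (A * Aᴴ - B * Bᴴ) ≤
      √((A - B) * (A - B)ᴴ).trace.re * √((A + B) * (A + B)ᴴ).trace.re := by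
  have hD : (A * Aᴴ - B * Bᴴ).IsHermitian :=
    (isHermitian_mul_conjTranspose_self A).sub (isHermitian_mul_conjTranspose_self B)
  set U : Matrix m m ℂ := (hD.eigenvectorUnitary : Matrix m m ℂ)
  set P := star U * A
  set Q := star U * B
  have hconj (M : Matrix m m ℂ) : star U * (M * Mᴴ) * U = (star U * M) * (star U * M)ᴴ := by
    simp only [conjTranspose_mul, star_eq_conjTranspose, conjTranspose_conjTranspose,
      Matrix.mul_assoc]
  have hfrob (M : Matrix m m ℂ) :
      ∑ i, ∑ k, ‖(star U * M) i k‖ ^ 2 = (M * Mᴴ).trace.re := by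
    rw [← Matrix.trace_star_mul_mul_of_mem_unitary hD.eigenvectorUnitary.2 (M * Mᴴ), hconj,
      trace, Complex.re_sum]
    simp only [diag_apply, mul_conjTranspose_self_apply_self]
    rfl
  have heig (i : m) : hD.eigenvalues i = ∑ k, (‖P i k‖ ^ 2 - ‖Q i k‖ ^ 2) := by
    rw [hD.eigenvalues_eq_re_conj_apply, Matrix.mul_sub, Matrix.sub_mul, hconj, hconj,
      Matrix.sub_apply, mul_conjTranspose_self_apply_self, mul_conjTranspose_self_apply_self,
      map_sub, RCLike.ofReal_re, RCLike.ofReal_re, Finset.sum_sub_distrib]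
  calc traceNorm (A * Aᴴ - B * Bᴴ) = ∑ i, |hD.eigenvalues i| :=
        hD.traceNorm_eq_sum_abs_eigenvalues
    _ ≤ ∑ i, ∑ k, ‖(P - Q) i k‖ * ‖(P + Q) i k‖ := by
        refine Finset.sum_le_sum fun i _ => ?_
        rw [heig]
        exact (Finset.abs_sum_le_sum_abs _ _).trans
          (Finset.sum_le_sum fun k _ => abs_norm_sq_sub_norm_sq_le (𝕜 := ℂ) _ _)
    _ ≤ √(∑ i, ∑ k, ‖(P - Q) i k‖ ^ 2) * √(∑ i, ∑ k, ‖(P + Q) i k‖ ^ 2) := by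
        simp only [← Fintype.sum_prod_type']
        exact Real.sum_mul_le_sqrt_mul_sqrt _ _ _
    _ = √((A - B) * (A - B)ᴴ).trace.re * √((A + B) * (A + B)ᴴ).trace.re := by
        rw [← Matrix.mul_sub, ← Matrix.mul_add, hfrob, hfrob]

theorem traceNorm_mul_conjTranspose_sub_le (A B : Matrix m m ℂ) :
    traceNorm (A * Aᴴ - B * Bᴴ) ≤
      √(((A * Aᴴ).trace.re + (B * Bᴴ).trace.re) ^ 2 - 4 * (A * Bᴴ).trace.re ^ 2) := by
  have hnonneg : 0 ≤ ((A - B) * (A - B)ᴴ).trace.re :=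
    (RCLike.nonneg_iff.mp (posSemidef_self_mul_conjTranspose (A - B)).trace_nonneg).1
  calc traceNorm (A * Aᴴ - B * Bᴴ)
      ≤ √((A - B) * (A - B)ᴴ).trace.re * √((A + B) * (A + B)ᴴ).trace.re :=
        traceNorm_mul_conjTranspose_sub_le_sqrt_mul_sqrt A B
    _ = _ := by
        have hsub := re_trace_sub_mul_conjTranspose_sub (𝕜 := ℂ) A B
        have hadd := re_trace_add_mul_conjTranspose_add (𝕜 := ℂ) A B
        simp only [RCLike.re_to_complex] at hsub hadd
        rw [← Real.sqrt_mul hnonneg, hsub, hadd]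
        congr 1
        ring

lemma Matrix.re_trace_mul_le_re_trace_cfcSqrt_mul {Λ ρ : Matrix m m ℂ} (hΛ : 0 ≤ Λ) (hΛ1 : Λ ≤ 1)
    (hρ : ρ.PosSemidef) : (Λ * ρ).trace.re ≤ (CFC.sqrt Λ * ρ).trace.re := by
  have h := (le_iff.mp (le_cfcSqrt_of_le_one hΛ hΛ1)).trace_mul_nonneg hρ
  rw [Matrix.sub_mul, trace_sub] at h
  exact sub_nonneg.mp (RCLike.nonneg_iff.mp h).1

theorem traceNorm_sub_inv_trace_smul_sqrt_mul_mul_sqrt_le {ρ Λ : Matrix m m ℂ}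
    (hρ : ρ.PosSemidef) (hΛ : Λ.PosSemidef) (hp : 0 < (Λ * ρ).trace.re) :
    traceNorm (ρ - (Λ * ρ).trace⁻¹ • (CFC.sqrt Λ * ρ * CFC.sqrt Λ)) ≤
      √((ρ.trace.re + 1) ^ 2 - 4 * (CFC.sqrt Λ * ρ).trace.re ^ 2 / (Λ * ρ).trace.re) := by
  set R := CFC.sqrt ρ
  set M := CFC.sqrt Λ
  set p := (Λ * ρ).trace.re
  set c := (√p)⁻¹
  have hp_re : (Λ * ρ).trace = p :=
    Complex.eq_re_of_ofReal_le (Complex.ofReal_zero ▸ hΛ.trace_mul_nonneg hρ)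
  have hc : c ^ 2 = p⁻¹ := by rw [inv_pow, Real.sq_sqrt hp.le]
  have hR : Rᴴ = R := (CFC.sqrt_nonneg ρ).posSemidef.1
  have hM : Mᴴ = M := (CFC.sqrt_nonneg Λ).posSemidef.1
  have hRR : R * R = ρ := CFC.sqrt_mul_sqrt_self ρ hρ.nonneg
  have hMM : M * M = Λ := CFC.sqrt_mul_sqrt_self Λ hΛ.nonneg
  have hBB : (c • (M * R)) * (c • (M * R))ᴴ = (c ^ 2) • (M * ρ * M) := by
    rw [conjTranspose_smul, conjTranspose_mul, hR, hM, star_trivial, smul_mul_smul, ← hRR]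
    simp only [Matrix.mul_assoc, sq]
  have hD : ρ - (Λ * ρ).trace⁻¹ • (M * ρ * M) = R * Rᴴ - (c • (M * R)) * (c • (M * R))ᴴ := by
    rw [hBB, hR, hRR, hp_re, hc, ← Complex.ofReal_inv, Complex.coe_smul]
  have hAA_tr : (R * Rᴴ).trace.re = ρ.trace.re := by rw [hR, hRR]
  have hBB_tr : ((c • (M * R)) * (c • (M * R))ᴴ).trace.re = 1 := by
    rw [hBB, trace_smul, trace_mul_cycle, hMM, Complex.smul_re, hc, smul_eq_mul,
      inv_mul_cancel₀ hp.ne']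
  have hAB_tr : (R * (c • (M * R))ᴴ).trace.re = c * (M * ρ).trace.re := by
    rw [conjTranspose_smul, conjTranspose_mul, hR, hM, star_trivial, Matrix.mul_smul, trace_smul,
      ← Matrix.mul_assoc, hRR, trace_mul_comm, Complex.smul_re, smul_eq_mul]
  have h := traceNorm_mul_conjTranspose_sub_le R (c • (M * R))
  rwa [← hD, hAA_tr, hBB_tr, hAB_tr, mul_pow, hc, ← div_eq_inv_mul, ← mul_div_assoc] at h

theorem stmt3_general {n : ℕ} (ρ Λ : Matrix (Fin n) (Fin n) ℂ)
    (hρ : ρ.PosSemidef) (hρtr : ρ.trace = 1)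
    (hΛ : Λ.PosSemidef) (hΛ1 : ((1 : Matrix (Fin n) (Fin n) ℂ) - Λ).PosSemidef)
    (ε : ℝ) (hε1 : ε < 1)
    (htr : 1 - ε ≤ ((Λ * ρ).trace).re) :
    traceNorm (ρ - ((Λ * ρ).trace)⁻¹ • (hΛ.sqrt * ρ * hΛ.sqrt)) ≤ 2 * Real.sqrt ε := by
  set p := (Λ * ρ).trace.re
  set g := (CFC.sqrt Λ * ρ).trace.re
  have hp : 0 < p := by linarith
  have hpg : p ≤ g := re_trace_mul_le_re_trace_cfcSqrt_mul hΛ.nonneg (le_iff.mpr hΛ1) hρ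
  have hg : p ≤ g ^ 2 / p := by rw [le_div_iff₀ hp]; nlinarith
  rw [hΛ.sqrt_eq_cfcSqrt]
  calc _ ≤ √((ρ.trace.re + 1) ^ 2 - 4 * g ^ 2 / p) :=
        traceNorm_sub_inv_trace_smul_sqrt_mul_mul_sqrt_le hρ hΛ hp
    _ ≤ √(2 ^ 2 * ε) := Real.sqrt_le_sqrt (by rw [hρtr, Complex.one_re, mul_div_assoc]; linarith)
    _ = 2 * √ε := by rw [Real.sqrt_mul (by norm_num), Real.sqrt_sq (by norm_num)]

/-- Gentle measurement lemma. -/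
theorem stmt3 {n : ℕ} (ρ Λ : Matrix (Fin n) (Fin n) ℂ)
    (hρ : ρ.PosSemidef) (hρtr : ρ.trace = 1)
    (hΛ : Λ.PosSemidef) (hΛ1 : ((1 : Matrix (Fin n) (Fin n) ℂ) - Λ).PosSemidef)
    (ε : ℝ) (hε0 : 0 ≤ ε) (hε1 : ε < 1)
    (htr : 1 - ε ≤ ((Λ * ρ).trace).re) :
    traceNorm (ρ - ((Λ * ρ).trace)⁻¹ • (hΛ.sqrt * ρ * hΛ.sqrt)) ≤ 2 * Real.sqrt ε :=
  stmt3_general ρ Λ hρ hρtr hΛ hΛ1 ε hε1 htr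
end

section
/- Let S be a finite set, l ∈ ℕ, and f : S^l → [0,1]. Suppose that for every probability distribution q on S that is an l-type (i.e., q(s) = N(s)/l for integer counts N(s)), we have Σ_{s^l ∈ S^l} f(s^l) · ∏_{i=1}^l q(s_i) ≥ 1 − γ for some γ ∈ [0,1]. Then for every s^l ∈ S^l, (1/l!) Σ_{σ ∈ 𝔖_l} f(σ(s^l)) ≥ 1 − (l+1)^{|S|} · γ, where σ(s^l) = (s_{σ(1)},…,s_{σ(l)}) (Ahlswede's robustification). -/
/-!
Fix `w` and let `q` be its empirical distribution, an `l`-type. Under the product measure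
`q^l` all words of the type class `T` of `w` are equally likely, and `T` is the most likely of
the at most `(l+1)^|S|` type classes, so `q^l(T) ≥ (l+1)^(-|S|)`. Applied at `q`, the hypothesis
gives `∑_{u ∈ T} (1 - f u) q^l(u) ≤ γ`, so the average of `f` over `T` is at least
`1 - γ / q^l(T) ≥ 1 - (l+1)^|S| γ`. Finally `T` is the `𝔖_l`-orbit of `w` and all fibres of
`σ ↦ w ∘ σ` have the same size, so averaging `f (w ∘ σ)` over `𝔖_l` is averaging `f` over `T`.
-/

open Finset Nat

theorem Nat.factorial_mul_pow_le_factorial_mul_pow (n m : ℕ) : n ! * n ^ m ≤ m ! * n ^ n := by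
  rcases le_total n m with h | h
  · calc n ! * n ^ m = n ! * n ^ (m - n) * n ^ n := by
          rw [mul_assoc, ← pow_add, Nat.sub_add_cancel h]
      _ ≤ m ! * n ^ n := Nat.mul_le_mul_right _ (Nat.factorial_mul_pow_sub_le_factorial h)
  · calc n ! * n ^ m = m ! * n.descFactorial (n - m) * n ^ m := by
          rw [← Nat.factorial_mul_descFactorial (Nat.sub_le n m), Nat.sub_sub_self h]
      _ ≤ m ! * n ^ (n - m) * n ^ m :=
          Nat.mul_le_mul_right _ (Nat.mul_le_mul_left _ (Nat.descFactorial_le_pow n _))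
      _ = m ! * n ^ n := by rw [mul_assoc, ← pow_add, Nat.sub_add_cancel h]

theorem sum_prod_eq_one {ι S : Type*} [Fintype ι] [DecidableEq ι] [Fintype S] {q : S → ℝ}
    (hq : ∑ s, q s = 1) : ∑ u : ι → S, ∏ i, q (u i) = 1 := by
  rw [← Fintype.prod_sum, hq, prod_const_one]

theorem sum_mul_le_sum_mul_add_one_sub {β : Type*} [Fintype β] [DecidableEq β] (T : Finset β)
    {f P : β → ℝ} (hf : ∀ u, f u ≤ 1) (hP : ∀ u, 0 ≤ P u) (hsum : ∑ u, P u = 1) :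
    ∑ u, f u * P u ≤ ∑ u ∈ T, f u * P u + (1 - ∑ u ∈ T, P u) := by
  rw [← sum_add_sum_compl T, ← hsum, ← sum_add_sum_compl T P, add_sub_cancel_left]
  gcongr with u
  exact mul_le_of_le_one_left (hP u) (hf u)

section WordTypes

variable {ι S : Type*} [Fintype ι] [DecidableEq S]

def wordCount (v : ι → S) (s : S) : ℕ := #{i | v i = s}

noncomputable def empiricalDist (w : ι → S) (s : S) : ℝ := wordCount w s / Fintype.card ι

theorem empiricalDist_nonneg (w : ι → S) (s : S) : 0 ≤ empiricalDist w s := by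
  unfold empiricalDist; positivity

theorem wordCount_le_card (v : ι → S) (s : S) : wordCount v s ≤ Fintype.card ι :=
  card_filter_le _ _

theorem prod_apply_eq_prod_pow_wordCount [Fintype S] {M : Type*} [CommMonoid M]
    (g : S → M) (v : ι → S) : ∏ i, g (v i) = ∏ s, g s ^ wordCount v s := by
  rw [← prod_fiberwise' univ v g]
  exact prod_congr rfl fun s _ => prod_const _

theorem sum_wordCount [Fintype S] (v : ι → S) : ∑ s, wordCount v s = Fintype.card ι := by
  rw [← Finset.card_univ]
  exact (card_eq_sum_card_fiberwise fun i _ => mem_univ (v i)).symm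

theorem sum_empiricalDist [Fintype S] [Nonempty ι] (w : ι → S) :
    ∑ s, empiricalDist w s = 1 := by
  simp only [empiricalDist, ← sum_div, ← Nat.cast_sum, sum_wordCount]
  exact div_self (Nat.cast_ne_zero.2 Fintype.card_ne_zero)

theorem wordCount_comp_perm (v : ι → S) (σ : Equiv.Perm ι) :
    wordCount (v ∘ σ) = wordCount v := by
  funext s
  simp only [wordCount, ← Fintype.card_subtype]
  exact Fintype.card_congr (σ.subtypeEquiv fun _ => Iff.rfl)

theorem exists_perm_comp_eq_of_wordCount_eq {v w : ι → S} (h : wordCount v = wordCount w) :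
    ∃ σ : Equiv.Perm ι, w ∘ σ = v := by
  have e : ∀ s, {i // v i = s} ≃ {i // w i = s} := fun s => Fintype.equivOfCardEq <| by
    simpa only [Fintype.card_subtype, wordCount] using congrFun h s
  exact ⟨Equiv.ofFiberEquiv e, funext fun i => Equiv.ofFiberEquiv_map e i⟩

variable [DecidableEq ι] [Fintype S]

def typeClass (w : ι → S) : Finset (ι → S) := {u | wordCount u = wordCount w}

theorem mem_typeClass_iff {u w : ι → S} : u ∈ typeClass w ↔ ∃ σ : Equiv.Perm ι, w ∘ σ = u := by
  simp only [typeClass, mem_filter, mem_univ, true_and]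
  constructor
  · exact exists_perm_comp_eq_of_wordCount_eq
  · rintro ⟨σ, rfl⟩
    exact wordCount_comp_perm w σ

theorem comp_perm_mem_typeClass {u w : ι → S} (hu : u ∈ typeClass w) (σ : Equiv.Perm ι) :
    u ∘ σ ∈ typeClass w := by
  obtain ⟨τ, rfl⟩ := mem_typeClass_iff.1 hu
  exact mem_typeClass_iff.2 ⟨τ * σ, rfl⟩

theorem card_typeClass_nsmul_sum_perm {M : Type*} [AddCommMonoid M] (w : ι → S)
    (g : (ι → S) → M) :
    #(typeClass w) • ∑ σ : Equiv.Perm ι, g (w ∘ σ) =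
      (Fintype.card ι)! • ∑ u ∈ typeClass w, g u := by
  have horbit : ∀ u ∈ typeClass w,
      ∑ σ : Equiv.Perm ι, g (u ∘ σ) = ∑ σ : Equiv.Perm ι, g (w ∘ σ) := by
    intro u hu
    obtain ⟨τ, rfl⟩ := mem_typeClass_iff.1 hu
    exact Equiv.sum_comp (Equiv.mulLeft τ) fun σ => g (w ∘ σ)
  have hshift : ∀ σ : Equiv.Perm ι, ∑ u ∈ typeClass w, g (u ∘ σ) = ∑ u ∈ typeClass w, g u :=
    fun σ => sum_nbij' (· ∘ σ) (· ∘ ⇑σ⁻¹) (fun u hu => comp_perm_mem_typeClass hu σ)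
      (fun u hu => comp_perm_mem_typeClass hu σ⁻¹) (fun u _ => by ext; simp)
      (fun u _ => by ext; simp) fun _ _ => rfl
  calc #(typeClass w) • ∑ σ : Equiv.Perm ι, g (w ∘ σ)
      = ∑ u ∈ typeClass w, ∑ σ : Equiv.Perm ι, g (u ∘ σ) := by
        rw [sum_congr rfl horbit, sum_const]
    _ = ∑ σ : Equiv.Perm ι, ∑ u ∈ typeClass w, g u := by
        rw [sum_comm]
        exact sum_congr rfl fun σ _ => hshift σ
    _ = (Fintype.card ι)! • ∑ u ∈ typeClass w, g u := by
        rw [sum_const, Finset.card_univ, Fintype.card_perm]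

theorem card_typeClass_mul_prod_factorial (w : ι → S) :
    #(typeClass w) * ∏ s, (wordCount w s)! = (Fintype.card ι)! := by
  -- orbit-stabilizer: apply the orbit identity to the indicator of `w`
  have h := card_typeClass_nsmul_sum_perm w fun u => if u = w then 1 else 0
  have hw : w ∈ typeClass w := mem_typeClass_iff.2 ⟨1, rfl⟩
  rw [sum_ite_eq', if_pos hw, sum_boole, ← Fintype.card_subtype, DomMulAct.stabilizer_card] at h
  simpa [wordCount, Fintype.card_subtype] using h

theorem prod_apply_eq_of_mem_typeClass {M : Type*} [CommMonoid M] (g : S → M) {u w : ι → S}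
    (hu : u ∈ typeClass w) : ∏ i, g (u i) = ∏ s, g s ^ wordCount w s := by
  rw [prod_apply_eq_prod_pow_wordCount, (mem_filter.1 hu).2]

theorem card_image_wordCount_le :
    #(univ.image (wordCount : (ι → S) → S → ℕ)) ≤ (Fintype.card ι + 1) ^ Fintype.card S := by
  calc #(univ.image (wordCount : (ι → S) → S → ℕ))
      ≤ #(Fintype.piFinset fun _ : S => range (Fintype.card ι + 1)) := by
        refine card_le_card fun m hm => ?_
        obtain ⟨v, -, rfl⟩ := mem_image.1 hm
        exact Fintype.mem_piFinset.2 fun s => mem_range_succ_iff.2 (wordCount_le_card v s)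
    _ = (Fintype.card ι + 1) ^ Fintype.card S := by simp

theorem card_typeClass_mul_prod_pow_le (v w : ι → S) :
    #(typeClass v) * ∏ s, wordCount w s ^ wordCount v s ≤
      #(typeClass w) * ∏ s, wordCount w s ^ wordCount w s := by
  have hpos : 0 < (∏ s, (wordCount v s)!) * ∏ s, (wordCount w s)! := by positivity
  refine Nat.le_of_mul_le_mul_right ?_ hpos
  calc #(typeClass v) * (∏ s, wordCount w s ^ wordCount v s) *
        ((∏ s, (wordCount v s)!) * ∏ s, (wordCount w s)!)
      = (#(typeClass v) * ∏ s, (wordCount v s)!) *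
          ∏ s, (wordCount w s)! * wordCount w s ^ wordCount v s := by
        rw [prod_mul_distrib]; ring
    _ ≤ (#(typeClass w) * ∏ s, (wordCount w s)!) *
          ∏ s, (wordCount v s)! * wordCount w s ^ wordCount w s := by
        rw [card_typeClass_mul_prod_factorial, card_typeClass_mul_prod_factorial]
        exact Nat.mul_le_mul_left _ <| prod_le_prod' fun s _ =>
          Nat.factorial_mul_pow_le_factorial_mul_pow _ _
    _ = #(typeClass w) * (∏ s, wordCount w s ^ wordCount w s) *
          ((∏ s, (wordCount v s)!) * ∏ s, (wordCount w s)!) := by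
        rw [prod_mul_distrib]; ring

theorem sum_prod_empiricalDist_typeClass (v w : ι → S) :
    ∑ u ∈ typeClass v, ∏ i, empiricalDist w (u i) =
      (#(typeClass v) * ∏ s, wordCount w s ^ wordCount v s : ℕ) /
        (Fintype.card ι : ℝ) ^ Fintype.card ι := by
  rw [sum_congr rfl fun u hu => prod_apply_eq_of_mem_typeClass _ hu, sum_const, nsmul_eq_mul]
  simp only [empiricalDist, div_pow, prod_div_distrib, prod_pow_eq_pow_sum, sum_wordCount]
  push_cast
  ring

theorem sum_prod_empiricalDist_typeClass_le (v w : ι → S) :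
    ∑ u ∈ typeClass v, ∏ i, empiricalDist w (u i) ≤
      ∑ u ∈ typeClass w, ∏ i, empiricalDist w (u i) := by
  rw [sum_prod_empiricalDist_typeClass, sum_prod_empiricalDist_typeClass]
  exact div_le_div_of_nonneg_right (by exact_mod_cast card_typeClass_mul_prod_pow_le v w)
    (by positivity)

theorem one_le_mul_sum_prod_empiricalDist [Nonempty ι] (w : ι → S) :
    1 ≤ ((Fintype.card ι : ℝ) + 1) ^ Fintype.card S *
      ∑ u ∈ typeClass w, ∏ i, empiricalDist w (u i) := by
  have htotal := sum_prod_eq_one (ι := ι) (sum_empiricalDist w)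
  calc (1 : ℝ) = ∑ m ∈ univ.image wordCount,
        ∑ u ∈ univ with wordCount u = m, ∏ i, empiricalDist w (u i) := by
        rw [← htotal]
        exact (sum_fiberwise_of_maps_to (fun u _ => mem_image_of_mem wordCount (mem_univ u)) _).symm
    _ ≤ ∑ _m ∈ univ.image wordCount, ∑ u ∈ typeClass w, ∏ i, empiricalDist w (u i) := by
        refine sum_le_sum fun m hm => ?_
        obtain ⟨v, -, rfl⟩ := mem_image.1 hm
        exact sum_prod_empiricalDist_typeClass_le v w
    _ ≤ _ := by
        rw [sum_const, nsmul_eq_mul]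
        gcongr
        · exact sum_nonneg fun u _ => prod_nonneg fun i _ => empiricalDist_nonneg w _
        · exact_mod_cast card_image_wordCount_le

theorem one_sub_le_sum_div_card_typeClass [Nonempty ι] (w : ι → S) {f : (ι → S) → ℝ}
    (hf : ∀ u, f u ≤ 1) {γ : ℝ} (hγ : 0 ≤ γ)
    (h : 1 - γ ≤ ∑ u, f u * ∏ i, empiricalDist w (u i)) :
    1 - ((Fintype.card ι : ℝ) + 1) ^ Fintype.card S * γ ≤
      (∑ u ∈ typeClass w, f u) / #(typeClass w) := by
  have hprod : ∀ u ∈ typeClass w,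
      ∏ i, empiricalDist w (u i) = ∏ s, empiricalDist w s ^ wordCount w s :=
    fun u hu => prod_apply_eq_of_mem_typeClass _ hu
  have hmass := one_le_mul_sum_prod_empiricalDist w
  have hrobust := h.trans <| sum_mul_le_sum_mul_add_one_sub (typeClass w) hf
    (fun u => prod_nonneg fun i _ => empiricalDist_nonneg w (u i))
    (sum_prod_eq_one (sum_empiricalDist w))
  rw [sum_congr rfl fun u hu => by rw [hprod u hu], ← sum_mul, sum_congr rfl hprod, sum_const,
    nsmul_eq_mul] at hrobust
  rw [sum_congr rfl hprod, sum_const, nsmul_eq_mul] at hmass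
  set p := ∏ s, empiricalDist w s ^ wordCount w s
  set c : ℝ := ↑(#(typeClass w))
  have hcp : 0 < c * p := pos_of_mul_pos_right (one_pos.trans_le hmass) (by positivity)
  have hp : 0 < p := pos_of_mul_pos_right hcp (Nat.cast_nonneg _)
  rw [le_div_iff₀ (pos_of_mul_pos_left hcp hp.le)]
  exact le_of_mul_le_mul_right (by linarith [mul_le_mul_of_nonneg_left hmass hγ]) hp

end WordTypes

theorem stmt5_general {S : Type*} [Fintype S] (l : ℕ) (hl : 0 < l)
    (f : (Fin l → S) → ℝ) (hf : ∀ w, f w ∈ Set.Icc (0:ℝ) 1)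
    (γ : ℝ) (hγ : γ ∈ Set.Icc (0:ℝ) 1)
    (H : ∀ q : S → ℝ, (∀ s, 0 ≤ q s) → (∑ s, q s = 1) →
      (∀ s, ∃ k : ℕ, q s = (k : ℝ) / l) →
      1 - γ ≤ ∑ w : Fin l → S, f w * ∏ i, q (w i)) :
    ∀ w : Fin l → S,
      1 - ((l : ℝ) + 1) ^ (Fintype.card S) * γ ≤
        (1 / (Nat.factorial l : ℝ)) * ∑ σ : Equiv.Perm (Fin l), f (w ∘ σ) := by
  intro w
  classical
  have : Nonempty (Fin l) := Fin.pos_iff_nonempty.mp hl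
  have havg := one_sub_le_sum_div_card_typeClass w (fun u => (hf u).2) hγ.1 <|
    H _ (empiricalDist_nonneg w) (sum_empiricalDist w) fun s => ⟨wordCount w s, by simp [empiricalDist]⟩
  have hperm : (#(typeClass w) : ℝ) * ∑ σ : Equiv.Perm (Fin l), f (w ∘ σ) =
      l ! * ∑ u ∈ typeClass w, f u := by
    simpa using card_typeClass_nsmul_sum_perm w f
  have hc : (0 : ℝ) < #(typeClass w) := by
    exact_mod_cast card_pos.2 ⟨w, mem_typeClass_iff.2 ⟨1, rfl⟩⟩
  rw [Fintype.card_fin] at havg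
  refine havg.trans_eq ?_
  rw [one_div_mul_eq_div, div_eq_div_iff hc.ne' (by positivity)]
  linarith

/-- Ahlswede's robustification technique. -/
theorem stmt5 {S : Type*} [Fintype S] [DecidableEq S] (l : ℕ) (hl : 0 < l)
    (f : (Fin l → S) → ℝ) (hf : ∀ w, f w ∈ Set.Icc (0:ℝ) 1)
    (γ : ℝ) (hγ : γ ∈ Set.Icc (0:ℝ) 1)
    (H : ∀ q : S → ℝ, (∀ s, 0 ≤ q s) → (∑ s, q s = 1) →
      (∀ s, ∃ k : ℕ, q s = (k : ℝ) / l) →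
      1 - γ ≤ ∑ w : Fin l → S, f w * ∏ i, q (w i)) :
    ∀ w : Fin l → S,
      1 - ((l : ℝ) + 1) ^ (Fintype.card S) * γ ≤
        (1 / (Nat.factorial l : ℝ)) * ∑ σ : Equiv.Perm (Fin l), f (w ∘ σ) :=
  stmt5_general l hl f hf γ hγ H
end
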